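/- Let W, W̃ ∈ ℝ^{n×n} be entrywise nonnegative with all column sums equal to 1 (transition matrices of digraphs), and let ε ∈ (0, 2/3). If W̃ is a unit-circle ε-approximation of W, then for every k ∈ ℕ, W̃^k is a unit-circle ε/(1 − 3ε/2)-approximation of W^k. -/

import Mathlib

open Matrix

noncomputable section

/-- The sesquilinear form `x* A y`. -/
def sesq {m : Type*} [Fintype m] (A : Matrix m m ℂ) (x y : m → ℂ) : ℂ :=
  star x ⬝ᵥ (A *ᵥ y)

/-- The squared Euclidean norm of a complex vector. -/
def vnormSq {m : Type*} [Fintype m] (x : m → ℂ) : ℝ :=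
  ∑ i, Complex.normSq (x i)

/-- `W̃` is a *unit-circle ε-approximation* of `W`. -/
def UnitCircleApprox {m : Type*} [Fintype m] (ε : ℝ) (W Wt : Matrix m m ℂ) : Prop :=
  ∀ x y : m → ℂ,
    ‖sesq (W - Wt) x y‖ ≤
      ε / 2 * (vnormSq x + vnormSq y - ‖sesq W x x + sesq W y y‖)

/-!
Write `A ν = 1 - ν • W` and `Ã ν = 1 - ν • W̃`. Unit-circle ε-approximation is equivalent to `Ã ν`
being a directed ε-approximation of `A ν` for all `‖ν‖ < 1` (one direction by letting `‖ν‖ → 1`).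
It also bounds the numerical radius of `W` by `1`, so `A ν` and `Ã ν` have positive definite
Hermitian parts and are invertible.

Fix `k > 0` and `‖μ‖ < 1`, and pick `ζ ^ k = μ` and a primitive `k`-th root of unity `ω`. Partial
fractions give `(1 - μ • W ^ k)⁻¹ = k⁻¹ • ∑ j, (A (ζ * ω ^ j))⁻¹`, and the same for `W̃`. Directed
ε-approximation implies the asymmetric bound
`‖x* (A - Ã) y‖ ≤ ε/2 · Re x* Ã x + ε/(2(1-ε)) · Re y* A y`. After substituting `x ↦ Ã⁻ᴴ x` and
`y ↦ A⁻¹ y`, its right-hand side is linear in `Ã⁻¹` and `A⁻¹`. So the bound survives the averaging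
of inverses and holds for `1 - μ • W ^ k` and `1 - μ • W̃ ^ k`. Taking `x = y` there, it
self-improves to a directed `ε/(1-ε)`-approximation, and `ε/(1-ε) ≤ ε/(1 - 3ε/2)`.
-/

open Finset

variable {m : Type*} [Fintype m]

section Sesq

theorem sesq_sub (A B : Matrix m m ℂ) (x y : m → ℂ) :
    sesq (A - B) x y = sesq A x y - sesq B x y := by
  simp [sesq, sub_mulVec, dotProduct_sub]

theorem sesq_smul (c : ℂ) (A : Matrix m m ℂ) (x y : m → ℂ) :
    sesq (c • A) x y = c * sesq A x y := by
  simp [sesq, smul_mulVec, dotProduct_smul]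

theorem sesq_sum {ι : Type*} (s : Finset ι) (A : ι → Matrix m m ℂ) (x y : m → ℂ) :
    sesq (∑ j ∈ s, A j) x y = ∑ j ∈ s, sesq (A j) x y := by
  simp [sesq, sum_mulVec, dotProduct_sum]

theorem sesq_mulVec (M P Q : Matrix m m ℂ) (x y : m → ℂ) :
    sesq M (P *ᵥ x) (Q *ᵥ y) = sesq (Pᴴ * M * Q) x y := by
  simp only [sesq, star_mulVec, ← dotProduct_mulVec, mulVec_mulVec, Matrix.mul_assoc]

theorem sesq_conjTranspose (M : Matrix m m ℂ) (x y : m → ℂ) :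
    sesq Mᴴ x y = star (sesq M y x) := by
  rw [sesq, star_dotProduct, star_mulVec, conjTranspose_conjTranspose, ← dotProduct_mulVec, sesq]

theorem re_sesq_conjTranspose (M : Matrix m m ℂ) (x : m → ℂ) :
    (sesq Mᴴ x x).re = (sesq M x x).re := by
  rw [sesq_conjTranspose, Complex.star_def, Complex.conj_re]

theorem sesq_one_self [DecidableEq m] (x : m → ℂ) : sesq 1 x x = vnormSq x := by
  simp [sesq, vnormSq, dotProduct, Complex.normSq_eq_conj_mul_self]

theorem sesq_ofReal_smul (a b : ℝ) (M : Matrix m m ℂ) (x y : m → ℂ) :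
    sesq M ((a : ℂ) • x) ((b : ℂ) • y) = (a * b : ℝ) * sesq M x y := by
  simp only [sesq, Complex.coe_smul, star_smul, star_trivial, mulVec_smul, dotProduct_smul,
    smul_dotProduct, Complex.real_smul, Complex.ofReal_mul]
  ring

theorem vnormSq_pos {x : m → ℂ} (hx : x ≠ 0) : 0 < vnormSq x := by
  obtain ⟨i, hi⟩ := Function.ne_iff.1 hx
  exact sum_pos' (fun j _ => Complex.normSq_nonneg _) ⟨i, mem_univ i, Complex.normSq_pos.2 hi⟩

theorem vnormSq_nonneg (x : m → ℂ) : 0 ≤ vnormSq x :=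
  sum_nonneg fun _ _ => Complex.normSq_nonneg _

end Sesq

/-- `(sesq A x x).re` is the quadratic form of the Hermitian part `(A + Aᴴ) / 2`, so this is the
directed ε-approximation of `A` by `At` used for Eulerian Laplacians. -/
def DirectedApprox (ε : ℝ) (A At : Matrix m m ℂ) : Prop :=
  ∀ x y : m → ℂ, ‖sesq (A - At) x y‖ ≤ ε / 2 * ((sesq A x x).re + (sesq A y y).re)

section DirectedApprox

variable {ε : ℝ} {A At : Matrix m m ℂ}

theorem DirectedApprox.mul_re_sesq_le (h : DirectedApprox ε A At) (x : m → ℂ) :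
    (1 - ε) * (sesq A x x).re ≤ (sesq At x x).re := by
  have hre : (sesq At x x).re = (sesq A x x).re - (sesq (A - At) x x).re := by
    rw [sesq_sub, Complex.sub_re]; ring
  have hxx := h x x
  have hnorm := Complex.re_le_norm (sesq (A - At) x x)
  linarith

theorem DirectedApprox.norm_sesq_sub_le (h : DirectedApprox ε A At) (hε0 : 0 ≤ ε) (hε1 : ε < 1)
    (x y : m → ℂ) :
    ‖sesq (A - At) x y‖ ≤ ε / 2 * (sesq At x x).re + ε / (2 * (1 - ε)) * (sesq A y y).re := by
  have ht : 0 < 1 - ε := by linarith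
  set s := √(1 - ε)
  have hs : 0 < s := Real.sqrt_pos.2 ht
  have hss : s * s = 1 - ε := Real.mul_self_sqrt ht.le
  have hscaled := h ((s : ℂ) • x) (((s⁻¹ : ℝ) : ℂ) • y)
  simp only [sesq_ofReal_smul, mul_inv_cancel₀ hs.ne', Complex.ofReal_one, one_mul,
    Complex.re_ofReal_mul, ← mul_inv, hss] at hscaled
  have hx := h.mul_re_sesq_le x
  calc _ ≤ _ := hscaled
    _ ≤ _ := by
      rw [show ε / (2 * (1 - ε)) = ε / 2 * (1 - ε)⁻¹ by field_simp]
      nlinarith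

theorem directedApprox_of_norm_sesq_sub_le (hε0 : 0 ≤ ε) (hε1 : ε < 1)
    (h : ∀ x y : m → ℂ,
      ‖sesq (A - At) x y‖ ≤ ε / 2 * (sesq At x x).re + ε / (2 * (1 - ε)) * (sesq A y y).re) :
    DirectedApprox (ε / (1 - ε)) A At := by
  have ht : 0 < 1 - ε := by linarith
  have hre : ∀ x, (sesq At x x).re ≤ (sesq A x x).re + ‖sesq (A - At) x x‖ := fun x => by
    have := neg_le_of_abs_le (Complex.abs_re_le_norm (sesq (A - At) x x))
    rw [sesq_sub, Complex.sub_re] at this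
    rw [sesq_sub]
    linarith
  have hdiag : ∀ x, ‖sesq (A - At) x x‖ ≤ ε / (1 - ε) * (sesq A x x).re := fun x => by
    have hxx := h x x
    have hx := hre x
    rw [div_mul_eq_mul_div, le_div_iff₀ ht]
    have key : (2 - ε) * (‖sesq (A - At) x x‖ * (1 - ε)) ≤ (2 - ε) * (ε * (sesq A x x).re) := by
      have := mul_le_mul_of_nonneg_left hxx (by linarith : 0 ≤ 2 * (1 - ε))
      field_simp at this
      nlinarith [mul_le_mul_of_nonneg_left hx (mul_nonneg hε0 ht.le)]
    exact le_of_mul_le_mul_left key (by linarith)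
  intro x y
  calc ‖sesq (A - At) x y‖
      ≤ ε / 2 * (sesq At x x).re + ε / (2 * (1 - ε)) * (sesq A y y).re := h x y
    _ ≤ ε / 2 * ((sesq A x x).re + ε / (1 - ε) * (sesq A x x).re)
        + ε / (2 * (1 - ε)) * (sesq A y y).re := by
      gcongr
      linarith [hre x, hdiag x]
    _ = ε / (1 - ε) / 2 * ((sesq A x x).re + (sesq A y y).re) := by
      field_simp
      ring

end DirectedApprox

theorem Real.le_of_forall_lt_one_mul_le {x y : ℝ} (h : ∀ a, 0 ≤ a → a < 1 → a * x ≤ y) : x ≤ y := by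
  by_contra! hyx
  have hy : 0 ≤ y := by simpa using h 0 le_rfl one_pos
  have hx : 0 < x := hy.trans_lt hyx
  have := h ((x + y) / (2 * x)) (by positivity) (by rw [div_lt_one (by positivity)]; linarith)
  rw [div_mul_eq_mul_div, div_le_iff₀ (by positivity)] at this
  nlinarith

section UnitCircle

variable {ε : ℝ} {W Wt : Matrix m m ℂ}

theorem UnitCircleApprox.norm_sesq_self_le (hε : 0 < ε) (h : UnitCircleApprox ε W Wt)
    (x : m → ℂ) : ‖sesq W x x‖ ≤ vnormSq x := by
  have hx := (norm_nonneg _).trans (h x x)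
  rw [← two_mul (sesq W x x), norm_mul, Complex.norm_two] at hx
  nlinarith

theorem UnitCircleApprox.mono {ε' : ℝ} (hε : 0 < ε) (hεε' : ε ≤ ε') (h : UnitCircleApprox ε W Wt) :
    UnitCircleApprox ε' W Wt := by
  intro x y
  have hxy := h x y
  have := (norm_nonneg _).trans hxy
  nlinarith

variable [DecidableEq m]

theorem re_sesq_one_sub_smul (ν : ℂ) (W : Matrix m m ℂ) (x : m → ℂ) :
    (sesq (1 - ν • W) x x).re = vnormSq x - (ν * sesq W x x).re := by
  rw [sesq_sub, sesq_smul, sesq_one_self, Complex.sub_re, Complex.ofReal_re]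

theorem norm_sesq_one_sub_smul_sub (ν : ℂ) (W Wt : Matrix m m ℂ) (x y : m → ℂ) :
    ‖sesq ((1 - ν • W) - (1 - ν • Wt)) x y‖ = ‖ν‖ * ‖sesq (W - Wt) x y‖ := by
  rw [sub_sub_sub_cancel_left, ← smul_sub, sesq_smul, norm_mul, sesq_sub, sesq_sub, norm_sub_rev]

theorem UnitCircleApprox.directedApprox_one_sub_smul (hε : 0 ≤ ε) (h : UnitCircleApprox ε W Wt)
    {ν : ℂ} (hν : ‖ν‖ ≤ 1) : DirectedApprox ε (1 - ν • W) (1 - ν • Wt) := by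
  intro x y
  have hc : (ν * (sesq W x x + sesq W y y)).re ≤ ‖sesq W x x + sesq W y y‖ := by
    refine (Complex.re_le_norm _).trans ?_
    rw [norm_mul]
    exact mul_le_of_le_one_left (norm_nonneg _) hν
  rw [norm_sesq_one_sub_smul_sub, re_sesq_one_sub_smul, re_sesq_one_sub_smul]
  calc ‖ν‖ * ‖sesq (W - Wt) x y‖ ≤ ‖sesq (W - Wt) x y‖ :=
        mul_le_of_le_one_left (norm_nonneg _) hν
    _ ≤ ε / 2 * (vnormSq x + vnormSq y - ‖sesq W x x + sesq W y y‖) := h x y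
    _ ≤ ε / 2 * (vnormSq x - (ν * sesq W x x).re + (vnormSq y - (ν * sesq W y y).re)) := by
      rw [mul_add, Complex.add_re] at hc
      gcongr
      linarith

theorem unitCircleApprox_of_directedApprox
    (h : ∀ ν : ℂ, ‖ν‖ < 1 → DirectedApprox ε (1 - ν • W) (1 - ν • Wt)) :
    UnitCircleApprox ε W Wt := by
  intro x y
  obtain ⟨z, hz, hzc⟩ := Complex.exists_norm_eq_mul_self (sesq W x x + sesq W y y)
  suffices ‖sesq (W - Wt) x y‖ + ε / 2 * ‖sesq W x x + sesq W y y‖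
      ≤ ε / 2 * (vnormSq x + vnormSq y) by linarith
  refine Real.le_of_forall_lt_one_mul_le fun r hr0 hr1 => ?_
  have hrz : ‖(r : ℂ) * z‖ = r := by simp [hz, abs_of_nonneg hr0]
  have := h (r * z) (hrz.trans_lt hr1) x y
  rw [norm_sesq_one_sub_smul_sub, hrz, re_sesq_one_sub_smul, re_sesq_one_sub_smul] at this
  have hre : ((r : ℂ) * z * sesq W x x).re + ((r : ℂ) * z * sesq W y y).re
      = r * ‖sesq W x x + sesq W y y‖ := by
    rw [← Complex.add_re, ← mul_add, mul_assoc, ← hzc, ← Complex.ofReal_mul,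
      Complex.ofReal_re]
  linear_combination this - ε / 2 * hre

end UnitCircle

section Inverses

variable [DecidableEq m]

theorem isUnit_det_of_re_sesq_pos {A : Matrix m m ℂ} (h : ∀ x ≠ 0, 0 < (sesq A x x).re) :
    IsUnit A.det := by
  rw [isUnit_iff_ne_zero]
  intro hdet
  obtain ⟨v, hv, hAv⟩ := exists_mulVec_eq_zero_iff.2 hdet
  simpa [sesq, hAv] using h v hv

theorem re_sesq_one_sub_smul_pos {W : Matrix m m ℂ} (hW : ∀ x, ‖sesq W x x‖ ≤ vnormSq x)
    {ν : ℂ} (hν : ‖ν‖ < 1) {x : m → ℂ} (hx : x ≠ 0) : 0 < (sesq (1 - ν • W) x x).re := by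
  rw [re_sesq_one_sub_smul]
  have hνW : (ν * sesq W x x).re ≤ ‖ν‖ * vnormSq x := by
    refine (Complex.re_le_norm _).trans ?_
    rw [norm_mul]
    exact mul_le_mul_of_nonneg_left (hW x) (norm_nonneg _)
  nlinarith [vnormSq_pos hx]

theorem re_sesq_mulVec_of_mul_eq_one {P Q : Matrix m m ℂ} (hPQ : P * Q = 1) (w : m → ℂ) :
    (sesq P (Q *ᵥ w) (Q *ᵥ w)).re = (sesq Q w w).re := by
  rw [sesq_mulVec, Matrix.mul_assoc, hPQ, Matrix.mul_one, re_sesq_conjTranspose]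

theorem re_sesq_conjTranspose_mulVec_of_mul_eq_one {P Q : Matrix m m ℂ} (hQP : Q * P = 1)
    (w : m → ℂ) : (sesq P (Qᴴ *ᵥ w) (Qᴴ *ᵥ w)).re = (sesq Q w w).re := by
  rw [sesq_mulVec, conjTranspose_conjTranspose, hQP, Matrix.one_mul, re_sesq_conjTranspose]

theorem nonsing_inv_mul_sub_mul_nonsing_inv {A At : Matrix m m ℂ} (hA : IsUnit A.det)
    (hAt : IsUnit At.det) : At⁻¹ * (A - At) * A⁻¹ = At⁻¹ - A⁻¹ := by
  rw [Matrix.mul_sub, Matrix.sub_mul, Matrix.mul_assoc, mul_nonsing_inv _ hA,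
    nonsing_inv_mul _ hAt, Matrix.mul_one, Matrix.one_mul]

variable {ι : Type*} {s : Finset ι} {c : ι → ℝ} {A At : ι → Matrix m m ℂ} {B Bt : Matrix m m ℂ}

theorem sub_eq_sum_of_mul_sum_nonsing_inv_eq_one (hA : ∀ j ∈ s, IsUnit (A j).det)
    (hAt : ∀ j ∈ s, IsUnit (At j).det) (hB : B * ∑ j ∈ s, (c j : ℂ) • (A j)⁻¹ = 1)
    (hBt : Bt * ∑ j ∈ s, (c j : ℂ) • (At j)⁻¹ = 1) :
    B - Bt = ∑ j ∈ s, (c j : ℂ) • (Bt * (At j)⁻¹ * (A j - At j) * ((A j)⁻¹ * B)) := by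
  have hB' := mul_eq_one_comm.1 hB
  calc B - Bt
      = Bt * ((∑ j ∈ s, (c j : ℂ) • (At j)⁻¹) - ∑ j ∈ s, (c j : ℂ) • (A j)⁻¹) * B := by
        rw [Matrix.mul_sub, Matrix.sub_mul, hBt, Matrix.mul_assoc, hB', Matrix.one_mul,
          Matrix.mul_one]
    _ = ∑ j ∈ s, (c j : ℂ) • (Bt * ((At j)⁻¹ * (A j - At j) * (A j)⁻¹) * B) := by
      rw [← sum_sub_distrib, Matrix.mul_sum, Matrix.sum_mul]
      refine sum_congr rfl fun j hj => ?_
      rw [nonsing_inv_mul_sub_mul_nonsing_inv (hA j hj) (hAt j hj), ← smul_sub, Matrix.mul_smul,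
        Matrix.smul_mul]
    _ = _ := by simp only [Matrix.mul_assoc]

theorem norm_sesq_sub_le_of_mul_sum_nonsing_inv_eq_one (hc : ∀ j ∈ s, 0 ≤ c j)
    (hA : ∀ j ∈ s, IsUnit (A j).det) (hAt : ∀ j ∈ s, IsUnit (At j).det)
    (hB : B * ∑ j ∈ s, (c j : ℂ) • (A j)⁻¹ = 1) (hBt : Bt * ∑ j ∈ s, (c j : ℂ) • (At j)⁻¹ = 1)
    {a b : ℝ} (h : ∀ j ∈ s, ∀ x y : m → ℂ,
      ‖sesq (A j - At j) x y‖ ≤ a * (sesq (At j) x x).re + b * (sesq (A j) y y).re)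
    (x y : m → ℂ) :
    ‖sesq (B - Bt) x y‖ ≤ a * (sesq Bt x x).re + b * (sesq B y y).re := by
  set u : ι → m → ℂ := fun j => ((At j)⁻¹)ᴴ *ᵥ (Btᴴ *ᵥ x)
  set v : ι → m → ℂ := fun j => (A j)⁻¹ *ᵥ (B *ᵥ y)
  have hsesq : sesq (B - Bt) x y = ∑ j ∈ s, (c j : ℂ) * sesq (A j - At j) (u j) (v j) := by
    rw [sub_eq_sum_of_mul_sum_nonsing_inv_eq_one hA hAt hB hBt, sesq_sum]
    refine sum_congr rfl fun j _ => ?_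
    rw [sesq_smul, sesq_mulVec, sesq_mulVec]
    simp only [conjTranspose_conjTranspose, Matrix.mul_assoc]
  have hx : (sesq Bt x x).re = ∑ j ∈ s, c j * (sesq (At j) (u j) (u j)).re := by
    rw [← re_sesq_conjTranspose_mulVec_of_mul_eq_one hBt, sesq_sum, Complex.re_sum]
    refine sum_congr rfl fun j hj => ?_
    rw [sesq_smul, Complex.re_ofReal_mul,
      re_sesq_conjTranspose_mulVec_of_mul_eq_one (nonsing_inv_mul _ (hAt j hj))]
  have hy : (sesq B y y).re = ∑ j ∈ s, c j * (sesq (A j) (v j) (v j)).re := by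
    rw [← re_sesq_mulVec_of_mul_eq_one (mul_eq_one_comm.1 hB), sesq_sum, Complex.re_sum]
    refine sum_congr rfl fun j hj => ?_
    rw [sesq_smul, Complex.re_ofReal_mul,
      re_sesq_mulVec_of_mul_eq_one (mul_nonsing_inv _ (hA j hj))]
  calc ‖sesq (B - Bt) x y‖ ≤ ∑ j ∈ s, c j * ‖sesq (A j - At j) (u j) (v j)‖ := by
        rw [hsesq]
        refine (norm_sum_le _ _).trans (le_of_eq (sum_congr rfl fun j hj => ?_))
        rw [norm_mul, Complex.norm_real, Real.norm_of_nonneg (hc j hj)]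
    _ ≤ ∑ j ∈ s, c j * (a * (sesq (At j) (u j) (u j)).re + b * (sesq (A j) (v j) (v j)).re) :=
        sum_le_sum fun j hj => mul_le_mul_of_nonneg_left (h j hj _ _) (hc j hj)
    _ = a * (sesq Bt x x).re + b * (sesq B y y).re := by
        rw [hx, hy, mul_sum, mul_sum, ← sum_add_distrib]
        exact sum_congr rfl fun j _ => by ring

end Inverses

section RootsOfUnity

theorem IsPrimitiveRoot.sum_sum_geom_smul {K R : Type*} [Field K] [Ring R] [Algebra K R]
    {ω : K} {k : ℕ} (hω : IsPrimitiveRoot ω k) (ζ : K) (x : R) :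
    ∑ j ∈ range k, ∑ i ∈ range k, ((ζ * ω ^ j) • x) ^ i = (k : K) • 1 := by
  rcases k.eq_zero_or_pos with rfl | hk
  · simp
  have hchar : ∀ i ∈ range k, i ≠ 0 → ∑ j ∈ range k, (ω ^ i) ^ j = 0 := fun i hi hi0 => by
    have hne : ω ^ i ≠ 1 := hω.pow_ne_one_of_pos_of_lt hi0 (mem_range.1 hi)
    rw [geom_sum_eq hne, ← pow_mul, mul_comm, pow_mul, hω.pow_eq_one, one_pow, sub_self,
      zero_div]
  rw [sum_comm, sum_eq_single_of_mem 0 (mem_range.2 hk)]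
  · simp [Nat.cast_smul_eq_nsmul]
  · intro i hi hi0
    simp_rw [smul_pow, mul_pow, ← pow_mul, mul_comm _ i, pow_mul, ← sum_smul, ← mul_sum,
      hchar i hi hi0, mul_zero, zero_smul]

variable [DecidableEq m]

theorem IsPrimitiveRoot.one_sub_smul_pow_mul_sum_nonsing_inv {ω : ℂ} {k : ℕ} (hk : 0 < k)
    (hω : IsPrimitiveRoot ω k) (ζ : ℂ) (M : Matrix m m ℂ)
    (hA : ∀ j ∈ range k, IsUnit (1 - (ζ * ω ^ j) • M).det) :
    (1 - ζ ^ k • M ^ k) * ∑ j ∈ range k, ((1 / k : ℝ) : ℂ) • (1 - (ζ * ω ^ j) • M)⁻¹ = 1 := by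
  have hfactor : ∀ j, 1 - ζ ^ k • M ^ k
      = (∑ i ∈ range k, ((ζ * ω ^ j) • M) ^ i) * (1 - (ζ * ω ^ j) • M) := fun j => by
    rw [geom_sum_mul_neg, smul_pow, mul_pow, ← pow_mul, mul_comm j, pow_mul, hω.pow_eq_one,
      one_pow, mul_one]
  rw [Matrix.mul_sum]
  calc ∑ j ∈ range k, (1 - ζ ^ k • M ^ k) * (((1 / k : ℝ) : ℂ) • (1 - (ζ * ω ^ j) • M)⁻¹)
      = ((1 / k : ℝ) : ℂ) • ∑ j ∈ range k, ∑ i ∈ range k, ((ζ * ω ^ j) • M) ^ i := by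
        rw [smul_sum]
        refine sum_congr rfl fun j hj => ?_
        rw [Matrix.mul_smul, hfactor j, Matrix.mul_assoc, mul_nonsing_inv _ (hA j hj),
          Matrix.mul_one]
    _ = 1 := by
      rw [hω.sum_sum_geom_smul, smul_smul]
      have : (k : ℂ) ≠ 0 := by exact_mod_cast hk.ne'
      push_cast
      rw [one_div, inv_mul_cancel₀ this, one_smul]

end RootsOfUnity

section Powers

variable [DecidableEq m] {ε : ℝ} {W Wt : Matrix m m ℂ}

theorem UnitCircleApprox.directedApprox_one_sub_smul_pow (hε0 : 0 < ε) (hε1 : ε < 1)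
    (h : UnitCircleApprox ε W Wt) {k : ℕ} (hk : 0 < k) {μ : ℂ} (hμ : ‖μ‖ < 1) :
    DirectedApprox (ε / (1 - ε)) (1 - μ • W ^ k) (1 - μ • Wt ^ k) := by
  obtain ⟨ζ, rfl⟩ := IsAlgClosed.exists_pow_nat_eq μ hk
  obtain ⟨ω, hω⟩ : ∃ ω : ℂ, IsPrimitiveRoot ω k := ⟨_, Complex.isPrimitiveRoot_exp k hk.ne'⟩
  have hν : ∀ j : ℕ, ‖ζ * ω ^ j‖ < 1 := fun j => by
    rw [norm_mul, norm_pow, hω.norm'_eq_one hk.ne', one_pow, mul_one]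
    rw [norm_pow] at hμ
    exact (pow_lt_one_iff_of_nonneg (norm_nonneg ζ) hk.ne').1 hμ
  have hdir : ∀ j : ℕ, DirectedApprox ε (1 - (ζ * ω ^ j) • W) (1 - (ζ * ω ^ j) • Wt) :=
    fun j => h.directedApprox_one_sub_smul hε0.le (hν j).le
  have hpos : ∀ j : ℕ, ∀ x ≠ 0, 0 < (sesq (1 - (ζ * ω ^ j) • W) x x).re := fun j x hx =>
    re_sesq_one_sub_smul_pos (h.norm_sesq_self_le hε0) (hν j) hx
  have hA : ∀ j ∈ range k, IsUnit (1 - (ζ * ω ^ j) • W).det := fun j _ =>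
    isUnit_det_of_re_sesq_pos (hpos j)
  have hAt : ∀ j ∈ range k, IsUnit (1 - (ζ * ω ^ j) • Wt).det := fun j _ =>
    isUnit_det_of_re_sesq_pos fun x hx =>
      (mul_pos (by linarith) (hpos j x hx)).trans_le ((hdir j).mul_re_sesq_le x)
  refine directedApprox_of_norm_sesq_sub_le hε0.le hε1 ?_
  refine norm_sesq_sub_le_of_mul_sum_nonsing_inv_eq_one (fun _ _ => by positivity) hA hAt
    (hω.one_sub_smul_pow_mul_sum_nonsing_inv hk ζ W hA)
    (hω.one_sub_smul_pow_mul_sum_nonsing_inv hk ζ Wt hAt) ?_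
  exact fun j _ => (hdir j).norm_sesq_sub_le hε0.le hε1

theorem UnitCircleApprox.pow (hε0 : 0 < ε) (hε1 : ε < 1) (h : UnitCircleApprox ε W Wt) (k : ℕ) :
    UnitCircleApprox (ε / (1 - ε)) (W ^ k) (Wt ^ k) := by
  rcases k.eq_zero_or_pos with rfl | hk
  · intro x y
    have hxy : 0 ≤ vnormSq x + vnormSq y := add_nonneg (vnormSq_nonneg x) (vnormSq_nonneg y)
    rw [pow_zero, pow_zero, sub_self, sesq_one_self, sesq_one_self, ← Complex.ofReal_add,
      Complex.norm_real, Real.norm_of_nonneg hxy]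
    simp [sesq]
  · exact unitCircleApprox_of_directedApprox fun μ hμ =>
      h.directedApprox_one_sub_smul_pow hε0 hε1 hk hμ

end Powers

theorem unitCircle_approx_preserved_by_powers_general {n : ℕ} (ε : ℝ)
    (h0 : 0 < ε) (h1 : ε < 2 / 3)
    (W Wt : Matrix (Fin n) (Fin n) ℝ)
    (h : UnitCircleApprox ε (W.map Complex.ofReal) (Wt.map Complex.ofReal)) :
    ∀ k : ℕ,
      UnitCircleApprox (ε / (1 - 3 * ε / 2))
        ((W ^ k).map Complex.ofReal) ((Wt ^ k).map Complex.ofReal) := by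
  intro k
  have hε : ε / (1 - ε) ≤ ε / (1 - 3 * ε / 2) :=
    div_le_div_of_nonneg_left h0.le (by linarith) (by linarith)
  refine UnitCircleApprox.mono (div_pos h0 (by linarith)) hε ?_
  show UnitCircleApprox _ ((W ^ k).map Complex.ofRealHom) ((Wt ^ k).map Complex.ofRealHom)
  rw [Matrix.map_pow, Matrix.map_pow]
  exact h.pow h0 (by linarith) k

/-- If `W, W̃` are transition matrices of digraphs (nonnegative
with unit column sums), `ε ∈ (0, 2/3)`, and `W̃ ∘≈_ε W`, then for every `k ∈ ℕ`,
`W̃^k ∘≈_{ε/(1−3ε/2)} W^k`. -/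
theorem unitCircle_approx_preserved_by_powers {n : ℕ} (ε : ℝ)
    (h0 : 0 < ε) (h1 : ε < 2 / 3)
    (W Wt : Matrix (Fin n) (Fin n) ℝ)
    (hWnn : ∀ i j, 0 ≤ W i j) (hWcol : ∀ j, ∑ i, W i j = 1)
    (hWtnn : ∀ i j, 0 ≤ Wt i j) (hWtcol : ∀ j, ∑ i, Wt i j = 1)
    (h : UnitCircleApprox ε (W.map Complex.ofReal) (Wt.map Complex.ofReal)) :
    ∀ k : ℕ,
      UnitCircleApprox (ε / (1 - 3 * ε / 2))
        ((W ^ k).map Complex.ofReal) ((Wt ^ k).map Complex.ofReal) :=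
  unitCircle_approx_preserved_by_powers_general ε h0 h1 W Wt h

end
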